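/- Let p ∈ ℂ[X] be a polynomial of degree exactly n. Then p is QSP-achievable, i.e. there exists Φ = (φ_0, …, φ_n) ∈ ℝ^{n+1} such that for all x ∈ [−1, 1] the (0,0) entry of QSP(Φ, x) equals p(x), if and only if there exists a polynomial q ∈ ℂ[X] such that: (a) deg q ≤ n − 1; (b) either p is even and q is odd, or p is odd and q is even (a polynomial r is even if r(−x) = r(x) for all x and odd if r(−x) = −r(x) for all x); and (c) for every real x, ‖p(x)‖² + (1 − x²)·‖q(x)‖² = 1. -/

import Mathlib

open Matrix Complex Polynomial

/-- The reflection matrix `R(x)` appearing in quantum signal processing. -/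
noncomputable def Rmat (x : ℝ) : Matrix (Fin 2) (Fin 2) ℂ :=
  !![(x : ℂ), (Real.sqrt (1 - x ^ 2) : ℂ); (Real.sqrt (1 - x ^ 2) : ℂ), -(x : ℂ)]

/-- The phase matrix `diag(e^{iφ}, e^{-iφ})`. -/
noncomputable def phaseMat (φ : ℝ) : Matrix (Fin 2) (Fin 2) ℂ :=
  !![Complex.exp (φ * Complex.I), 0; 0, Complex.exp (-(φ * Complex.I))]

/-- The quantum signal processing matrix
`QSP(Φ, x) = e^{iφ₀σ_z} ∏_{j=1}^n R(x) e^{iφ_jσ_z}`, product from `j = 1` on the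
left to `j = n` on the right. -/
noncomputable def QSP (n : ℕ) (Φ : ℕ → ℝ) (x : ℝ) : Matrix (Fin 2) (Fin 2) ℂ :=
  phaseMat (Φ 0) * ((List.range n).map (fun j => Rmat x * phaseMat (Φ (j + 1)))).prod

/-!
The first row of `QSP(Φ, x)` has the form `(P(x), i√(1-x²) Q(x))` with polynomials `P`, `Q`:
right multiplication by `R(x) · diag(e^{iφ}, e^{-iφ})` keeps this shape, and the new pair comes
from a linear recurrence that raises both degrees by one, flips both parities, and preserves
`|P|² + (1 - x²)|Q|²` (the matrices are unitary for `x ∈ [-1, 1]`).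

Conversely, let `P`, `Q` have degrees `≤ n + 1`, `≤ n`, parities `n + 1`, `n`, and satisfy
`P P̄ + (1 - X²) Q Q̄ = 1`. The coefficient of `X^{2n+2}` in this identity shows that the coefficients
of `X^{n+1}` in `P` and of `X^n` in `Q` have equal modulus, so some phase `φ` makes the inverse step
(by `diag(e^{-iφ}, e^{iφ}) · R(x)`, as `R(x)² = 1`) cancel the top coefficients; parity then
lowers the degrees by one more. Peeling off phases one at a time recovers `Φ`.
-/

namespace Polynomial

variable {R : Type*} [Semiring R] {p : R[X]} {k : ℕ}

theorem degree_lt_of_coeff_eq_zero (hd : p.degree < ↑(k + 1)) (hk : p.coeff k = 0) :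
    p.degree < k := by
  rw [degree_lt_iff_coeff_zero] at hd ⊢
  intro m hm
  rcases hm.eq_or_lt with rfl | hm
  exacts [hk, hd m hm]

theorem natDegree_le_of_degree_lt_succ (h : p.degree < ↑(k + 1)) : p.natDegree ≤ k :=
  natDegree_le_iff_coeff_eq_zero.2 fun m hm => (degree_lt_iff_coeff_zero _ _).1 h m hm

end Polynomial

section Parity

variable {R : Type*} [CommRing R]

def HasParity (k : ℕ) (p : R[X]) : Prop :=
  ∀ z, p.eval (-z) = (-1) ^ k * p.eval z

theorem hasParity_add_two {k : ℕ} {p : R[X]} : HasParity (k + 2) p ↔ HasParity k p := by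
  simp [HasParity, pow_add]

theorem HasParity.neg_one_pow_eq [IsDomain R] [Infinite R] {j k : ℕ} {p : R[X]}
    (h : HasParity j p) (hk : p.coeff k ≠ 0) : (-1 : R) ^ k = (-1) ^ j := by
  have hcomp : p.comp (C (-1) * X) = C ((-1) ^ j) * p :=
    Polynomial.funext fun z => by simp [eval_comp, h z]
  have hcoeff := congrArg (coeff · k) hcomp
  simp only [comp_C_mul_X_coeff, coeff_C_mul] at hcoeff
  exact mul_right_cancel₀ hk (by rw [← hcoeff, mul_comm])

theorem HasParity.degree_lt [IsDomain R] [CharZero R] {k : ℕ} {p : R[X]}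
    (h : HasParity (k + 1) p) (hd : p.degree < ↑(k + 1)) : p.degree < k := by
  refine degree_lt_of_coeff_eq_zero hd (by_contra fun hk => ?_)
  have hsign : (-1 : R) ^ k = -(-1) ^ k := by simpa [pow_succ] using h.neg_one_pow_eq hk
  exact pow_ne_zero k (neg_ne_zero.2 one_ne_zero) (self_eq_neg.1 hsign)

theorem even_odd_or_odd_even_iff [IsDomain R] [Infinite R] {n : ℕ} {p q : R[X]}
    (hp : p.coeff n ≠ 0) :
    (((∀ x, p.eval (-x) = p.eval x) ∧ (∀ x, q.eval (-x) = -q.eval x)) ∨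
      ((∀ x, p.eval (-x) = -p.eval x) ∧ (∀ x, q.eval (-x) = q.eval x))) ↔
      HasParity n p ∧ HasParity (n + 1) q := by
  have even_iff (r : R[X]) : (∀ x, r.eval (-x) = r.eval x) ↔ HasParity 0 r := by
    simp [HasParity]
  have odd_iff (r : R[X]) : (∀ x, r.eval (-x) = -r.eval x) ↔ HasParity 1 r := by
    simp [HasParity]
  simp only [even_iff, odd_iff]
  constructor
  · rintro (⟨hp', hq'⟩ | ⟨hp', hq'⟩) <;>
    · have hsign := hp'.neg_one_pow_eq hp
      simp_all [HasParity, pow_succ]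
  · rintro ⟨hp', hq'⟩
    rcases neg_one_pow_eq_or R n with hsign | hsign
    · left; simp_all [HasParity, pow_succ]
    · right; simp_all [HasParity, pow_succ]

end Parity

section Recurrence

variable {R : Type*} [CommRing R]

noncomputable def qspRec (α β γ δ : R) (PQ : R[X] × R[X]) : R[X] × R[X] :=
  (C α * X * PQ.1 + C β * (1 - X ^ 2) * PQ.2, C γ * X * PQ.2 + C δ * PQ.1)

variable (α β γ δ : R) (PQ : R[X] × R[X])

theorem qspRec_fst_coeff_add_two (m : ℕ) :
    (qspRec α β γ δ PQ).1.coeff (m + 2) =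
      α * PQ.1.coeff (m + 1) + β * (PQ.2.coeff (m + 2) - PQ.2.coeff m) := by
  simp [qspRec, mul_assoc, sub_mul, coeff_X_mul, coeff_X_pow_mul']

theorem qspRec_snd_coeff_succ (m : ℕ) :
    (qspRec α β γ δ PQ).2.coeff (m + 1) = γ * PQ.2.coeff m + δ * PQ.1.coeff (m + 1) := by
  simp [qspRec, mul_assoc, coeff_X_mul]

theorem degree_qspRec_lt {n : ℕ} (hP : PQ.1.degree < ↑(n + 1)) (hQ : PQ.2.degree < n) :
    (qspRec α β γ δ PQ).1.degree < ↑(n + 2) ∧ (qspRec α β γ δ PQ).2.degree < ↑(n + 1) := by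
  rw [degree_lt_iff_coeff_zero] at hP hQ ⊢
  rw [degree_lt_iff_coeff_zero]
  constructor
  · intro m hm
    obtain ⟨k, rfl⟩ : ∃ k, m = k + 2 := ⟨m - 2, by omega⟩
    rw [qspRec_fst_coeff_add_two, hP _ (by omega), hQ _ (by omega), hQ _ (by omega)]
    ring
  · intro m hm
    obtain ⟨k, rfl⟩ : ∃ k, m = k + 1 := ⟨m - 1, by omega⟩
    rw [qspRec_snd_coeff_succ, hP _ (by omega), hQ _ (by omega)]
    ring

theorem HasParity.qspRec {k : ℕ} (hP : HasParity k PQ.1) (hQ : HasParity (k + 1) PQ.2) :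
    HasParity (k + 1) (qspRec α β γ δ PQ).1 ∧ HasParity k (qspRec α β γ δ PQ).2 := by
  constructor <;> intro z <;> simp only [_root_.qspRec, eval_add, eval_mul, eval_sub, eval_pow,
    eval_C, eval_X, eval_one, hP z, hQ z] <;> ring

end Recurrence

theorem norm_sq_rotation (x u : ℝ) (p q : ℂ) :
    ‖x * p + I * u * q‖ ^ 2 + u * ‖x * q + I * p‖ ^ 2 = (x ^ 2 + u) * (‖p‖ ^ 2 + u * ‖q‖ ^ 2) := by
  simp only [Complex.sq_norm, normSq_apply, add_re, mul_re, ofReal_re, ofReal_im, zero_mul, sub_zero,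
    I_re, I_im, mul_zero, sub_self, mul_im, one_mul, zero_add, zero_sub, add_im, add_zero]
  ring

theorem exists_exp_sq_mul_eq {a b : ℂ} (h : ‖a‖ = ‖b‖) : ∃ φ : ℝ, a = exp (φ * I) ^ 2 * b := by
  rcases eq_or_ne b 0 with rfl | hb
  · exact ⟨0, by simpa using h⟩
  obtain ⟨θ, hθ⟩ := (norm_eq_one_iff (a / b)).1 (by rw [norm_div, h, div_self (by simpa)])
  refine ⟨θ / 2, ?_⟩
  calc a = a / b * b := (div_mul_cancel₀ a hb).symm
    _ = exp (↑(θ / 2) * I) ^ 2 * b := by rw [← hθ, ← exp_nat_mul]; push_cast; ring_nf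

theorem mul_map_conj_add_eq_one {P Q : ℂ[X]}
    (h : ∀ x : ℝ, ‖P.eval (x : ℂ)‖ ^ 2 + (1 - x ^ 2) * ‖Q.eval (x : ℂ)‖ ^ 2 = 1) :
    P * P.map (starRingEnd ℂ) + (1 - X ^ 2) * (Q * Q.map (starRingEnd ℂ)) = 1 := by
  refine eq_of_infinite_eval_eq _ _
    ((Set.infinite_range_of_injective ofReal_injective).mono ?_)
  rintro _ ⟨x, rfl⟩
  have heval (p : ℂ[X]) : (p.map (starRingEnd ℂ)).eval (x : ℂ) = starRingEnd ℂ (p.eval (x : ℂ)) := by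
    simpa using eval_map_apply (starRingEnd ℂ) (x : ℂ) (p := p)
  simp only [Set.mem_ofPred_eq, eval_add, eval_mul, eval_sub, eval_pow, eval_one, eval_X, heval,
    mul_conj']
  exact_mod_cast h x

/-- With `s = √(1 - x²)`, the row `(P(x), i s Q(x)) · R(x) · phaseMat φ` equals
`(P'(x), i s Q'(x))` for `(P', Q') = qspStep φ (P, Q)`. -/
noncomputable def qspStep (φ : ℝ) : ℂ[X] × ℂ[X] → ℂ[X] × ℂ[X] :=
  qspRec (exp (φ * I)) (I * exp (φ * I)) (-exp (-(φ * I))) (-I * exp (-(φ * I)))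

noncomputable def qspUnstep (φ : ℝ) : ℂ[X] × ℂ[X] → ℂ[X] × ℂ[X] :=
  qspRec (exp (-(φ * I))) (I * exp (φ * I)) (-exp (φ * I)) (-I * exp (-(φ * I)))

theorem qspStep_qspUnstep (φ : ℝ) (PQ : ℂ[X] × ℂ[X]) : qspStep φ (qspUnstep φ PQ) = PQ := by
  have hexp : exp (φ * I) * exp (-(φ * I)) = 1 := by rw [← exp_add, add_neg_cancel, exp_zero]
  ext1 <;> refine Polynomial.funext fun z => ?_ <;>
    simp only [qspStep, qspUnstep, qspRec, eval_add, eval_mul, eval_sub, eval_pow, eval_C,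
      eval_X, eval_one]
  · linear_combination PQ.1.eval z * hexp +
      exp (φ * I) * exp (-(φ * I)) * (z ^ 2 - 1) * PQ.1.eval z * I_sq
  · linear_combination PQ.2.eval z * hexp +
      exp (φ * I) * exp (-(φ * I)) * (z ^ 2 - 1) * PQ.2.eval z * I_sq

theorem qspStep_fst_eval (φ : ℝ) (PQ : ℂ[X] × ℂ[X]) (z : ℂ) :
    (qspStep φ PQ).1.eval z = exp (φ * I) * (z * PQ.1.eval z + I * (1 - z ^ 2) * PQ.2.eval z) := by
  simp only [qspStep, qspRec, eval_add, eval_mul, eval_sub, eval_pow, eval_C, eval_X, eval_one]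
  ring

theorem qspStep_snd_eval (φ : ℝ) (PQ : ℂ[X] × ℂ[X]) (z : ℂ) :
    (qspStep φ PQ).2.eval z = -exp (-(φ * I)) * (z * PQ.2.eval z + I * PQ.1.eval z) := by
  simp only [qspStep, qspRec, eval_add, eval_mul, eval_C, eval_X]
  ring

theorem norm_sq_qspStep (φ x : ℝ) (PQ : ℂ[X] × ℂ[X]) :
    ‖(qspStep φ PQ).1.eval (x : ℂ)‖ ^ 2 + (1 - x ^ 2) * ‖(qspStep φ PQ).2.eval (x : ℂ)‖ ^ 2 =
      ‖PQ.1.eval (x : ℂ)‖ ^ 2 + (1 - x ^ 2) * ‖PQ.2.eval (x : ℂ)‖ ^ 2 := by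
  rw [qspStep_fst_eval, qspStep_snd_eval, ← ofReal_pow, ← ofReal_one, ← ofReal_sub, norm_mul,
    norm_mul, norm_neg, ← neg_mul, ← ofReal_neg, norm_exp_ofReal_mul_I, norm_exp_ofReal_mul_I,
    one_mul, one_mul, norm_sq_rotation]
  ring

noncomputable def qspPoly (Φ : ℕ → ℝ) : ℕ → ℂ[X] × ℂ[X]
  | 0 => (C (exp (Φ 0 * I)), 0)
  | n + 1 => qspStep (Φ (n + 1)) (qspPoly Φ n)

theorem qspPoly_update_of_lt (Φ : ℕ → ℝ) (φ : ℝ) {m n : ℕ} (h : n < m) :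
    qspPoly (Function.update Φ m φ) n = qspPoly Φ n := by
  induction n with
  | zero => simp [qspPoly, Function.update_of_ne h.ne]
  | succ n ih => simp [qspPoly, Function.update_of_ne (by omega : n + 1 ≠ m), ih (by omega)]

theorem QSP_succ (n : ℕ) (Φ : ℕ → ℝ) (x : ℝ) :
    QSP (n + 1) Φ x = QSP n Φ x * (Rmat x * phaseMat (Φ (n + 1))) := by
  simp [QSP, List.range_succ, mul_assoc]

theorem QSP_apply_zero {x : ℝ} (hx : x ∈ Set.Icc (-1 : ℝ) 1) (Φ : ℕ → ℝ) (n : ℕ) :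
    QSP n Φ x 0 =
      ![(qspPoly Φ n).1.eval (x : ℂ), I * (Real.sqrt (1 - x ^ 2) : ℂ) * (qspPoly Φ n).2.eval ↑x] := by
  have hsqrt : (Real.sqrt (1 - x ^ 2) : ℂ) ^ 2 = 1 - (x : ℂ) ^ 2 := by
    rw [← ofReal_pow, Real.sq_sqrt (by nlinarith [hx.1, hx.2])]
    push_cast
    ring
  induction n with
  | zero => ext j; fin_cases j <;> simp [QSP, qspPoly, phaseMat]
  | succ n ih =>
    have ih0 := congrFun ih 0
    have ih1 := congrFun ih 1
    simp only [Matrix.cons_val_zero, Matrix.cons_val_one] at ih0 ih1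
    ext j; fin_cases j <;>
      simp only [Fin.zero_eta, Fin.mk_one, Fin.isValue, QSP_succ, Matrix.mul_apply, Fin.sum_univ_two,
        Rmat, phaseMat, of_apply, cons_val', cons_val_zero, cons_val_one, cons_val_fin_one, ih0, ih1,
        qspPoly, qspStep_fst_eval, qspStep_snd_eval, mul_zero, add_zero, zero_add]
    · linear_combination I * exp (Φ (n + 1) * I) * (qspPoly Φ n).2.eval (x : ℂ) * hsqrt
    · linear_combination
        (Real.sqrt (1 - x ^ 2) : ℂ) * exp (-(Φ (n + 1) * I)) * (qspPoly Φ n).1.eval (x : ℂ) * I_sq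

structure IsQSPPair (n : ℕ) (PQ : ℂ[X] × ℂ[X]) : Prop where
  degree_fst_lt : PQ.1.degree < ↑(n + 1)
  degree_snd_lt : PQ.2.degree < n
  hasParity_fst : HasParity n PQ.1
  hasParity_snd : HasParity (n + 1) PQ.2
  norm_sq_add : ∀ x : ℝ, ‖PQ.1.eval (x : ℂ)‖ ^ 2 + (1 - x ^ 2) * ‖PQ.2.eval (x : ℂ)‖ ^ 2 = 1

namespace IsQSPPair

variable {n : ℕ} {PQ : ℂ[X] × ℂ[X]}

theorem qspStep (h : IsQSPPair n PQ) (φ : ℝ) : IsQSPPair (n + 1) (qspStep φ PQ) :=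
  have hdeg := degree_qspRec_lt _ _ _ _ PQ h.degree_fst_lt h.degree_snd_lt
  have hpar := h.hasParity_fst.qspRec _ _ _ _ PQ h.hasParity_snd
  { degree_fst_lt := hdeg.1
    degree_snd_lt := hdeg.2
    hasParity_fst := hpar.1
    hasParity_snd := hasParity_add_two.2 hpar.2
    norm_sq_add := fun x => (norm_sq_qspStep φ x PQ).trans (h.norm_sq_add x) }

theorem qspPoly (Φ : ℕ → ℝ) (n : ℕ) : IsQSPPair n (qspPoly Φ n) := by
  induction n with
  | zero =>
    refine ⟨degree_C_le.trans_lt (by simp), by simp [_root_.qspPoly],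
      fun z => by simp [_root_.qspPoly], fun z => by simp [_root_.qspPoly],
      fun x => by simp [_root_.qspPoly, norm_exp_ofReal_mul_I]⟩
  | succ n ih => exact ih.qspStep _

theorem norm_coeff_eq (h : IsQSPPair (n + 1) PQ) : ‖PQ.1.coeff (n + 1)‖ = ‖PQ.2.coeff n‖ := by
  have hP := natDegree_le_of_degree_lt_succ h.degree_fst_lt
  have hQ := natDegree_le_of_degree_lt_succ h.degree_snd_lt
  have hQQ : (PQ.2 * PQ.2.map (starRingEnd ℂ)).natDegree ≤ n + n :=
    natDegree_mul_le_of_le hQ (by rwa [natDegree_map])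
  have htop := congrArg (coeff · (n + 1 + (n + 1))) (mul_map_conj_add_eq_one h.norm_sq_add)
  simp only [coeff_add, sub_mul, one_mul, coeff_sub, show n + 1 + (n + 1) = n + n + 2 by ring,
    coeff_X_pow_mul, coeff_eq_zero_of_natDegree_lt (hQQ.trans_lt (by omega : n + n < n + n + 2))]
    at htop
  rw [show n + n + 2 = (n + 1) + (n + 1) by ring,
    coeff_mul_add_eq_of_natDegree_le hP (by rwa [natDegree_map]), coeff_map, mul_conj',
    coeff_mul_add_eq_of_natDegree_le hQ (by rwa [natDegree_map]), coeff_map, mul_conj', coeff_one,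
    if_neg (by omega)] at htop
  have hsq : (‖PQ.1.coeff (n + 1)‖ : ℂ) ^ 2 = (‖PQ.2.coeff n‖ : ℂ) ^ 2 := by
    linear_combination htop
  exact (pow_left_inj₀ (norm_nonneg _) (norm_nonneg _) two_ne_zero).1 (by exact_mod_cast hsq)

theorem exists_qspStep_eq (h : IsQSPPair (n + 1) PQ) :
    ∃ φ PQ', IsQSPPair n PQ' ∧ _root_.qspStep φ PQ' = PQ := by
  obtain ⟨φ, hφ⟩ := exists_exp_sq_mul_eq (a := PQ.1.coeff (n + 1)) (b := I * PQ.2.coeff n)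
    (by rw [norm_mul, norm_I, one_mul, h.norm_coeff_eq])
  have hexp : exp (φ * I) * exp (-(φ * I)) = 1 := by rw [← exp_add, add_neg_cancel, exp_zero]
  have hdeg : (qspUnstep φ PQ).1.degree < ↑(n + 3) ∧ (qspUnstep φ PQ).2.degree < ↑(n + 2) :=
    degree_qspRec_lt _ _ _ _ PQ h.degree_fst_lt h.degree_snd_lt
  have hpar : HasParity (n + 2) (qspUnstep φ PQ).1 ∧ HasParity (n + 1) (qspUnstep φ PQ).2 :=
    h.hasParity_fst.qspRec _ _ _ _ PQ h.hasParity_snd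
  have hQ : PQ.2.coeff (n + 2) = 0 :=
    coeff_eq_zero_of_degree_lt (h.degree_snd_lt.trans (by exact_mod_cast (by omega)))
  have htop_fst : (qspUnstep φ PQ).1.coeff (n + 2) = 0 := by
    rw [qspUnstep, qspRec_fst_coeff_add_two, hQ]
    linear_combination exp (-(φ * I)) * hφ + I * exp (φ * I) * PQ.2.coeff n * hexp
  have htop_snd : (qspUnstep φ PQ).2.coeff (n + 1) = 0 := by
    rw [qspUnstep, qspRec_snd_coeff_succ]
    linear_combination -I * exp (-(φ * I)) * hφ + exp (φ * I) * PQ.2.coeff n * hexp -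
      exp (φ * I) ^ 2 * exp (-(φ * I)) * PQ.2.coeff n * I_sq
  refine ⟨φ, qspUnstep φ PQ, ⟨?_, ?_, hasParity_add_two.1 hpar.1, hpar.2, fun x => ?_⟩,
    qspStep_qspUnstep φ PQ⟩
  · exact hpar.1.degree_lt (degree_lt_of_coeff_eq_zero hdeg.1 htop_fst)
  · exact hpar.2.degree_lt (degree_lt_of_coeff_eq_zero hdeg.2 htop_snd)
  · rw [← norm_sq_qspStep φ, qspStep_qspUnstep]
    exact h.norm_sq_add x

theorem exists_qspPoly_eq (h : IsQSPPair n PQ) : ∃ Φ, _root_.qspPoly Φ n = PQ := by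
  induction n generalizing PQ with
  | zero =>
    obtain ⟨P, Q⟩ := PQ
    have hQ : Q = 0 := by simpa using h.degree_snd_lt
    have hP : P = C (P.coeff 0) :=
      eq_C_of_degree_le_zero (Nat.WithBot.lt_one_iff_le_zero.1 (by simpa using h.degree_fst_lt))
    have hnorm : ‖P.coeff 0‖ = 1 := by
      have h1 := h.norm_sq_add 1
      rw [hP, eval_C] at h1
      exact (pow_eq_one_iff_of_nonneg (norm_nonneg _) two_ne_zero).1 (by simpa using h1)
    obtain ⟨θ, hθ⟩ := (norm_eq_one_iff _).1 hnorm
    exact ⟨fun _ => θ, by rw [hQ, hP]; simp [_root_.qspPoly, hθ]⟩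
  | succ n ih =>
    obtain ⟨φ, PQ', h', rfl⟩ := h.exists_qspStep_eq
    obtain ⟨Φ, rfl⟩ := ih h'
    exact ⟨Function.update Φ (n + 1) φ, by
      simp [_root_.qspPoly, qspPoly_update_of_lt Φ φ n.lt_succ_self]⟩

end IsQSPPair

/-- **Characterization of QSP-achievable polynomials** (Theorem A.2). A degree-`n`
polynomial `p ∈ ℂ[X]` is QSP-achievable iff there is a `q ∈ ℂ[X]` with
`deg q ≤ n - 1`, `(p, q)` of parities (even, odd) or (odd, even), and
`|p(x)|² + (1 - x²)|q(x)|² = 1` for all real `x`. -/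
theorem qsp_achievable_characterization (n : ℕ) (p : Polynomial ℂ) (hp : p.degree = n) :
    (∃ Φ : ℕ → ℝ, ∀ x : ℝ, x ∈ Set.Icc (-1 : ℝ) 1 → (QSP n Φ x) 0 0 = p.eval (x : ℂ)) ↔
    (∃ q : Polynomial ℂ,
      q.degree < n ∧
      (((∀ x : ℂ, p.eval (-x) = p.eval x) ∧ (∀ x : ℂ, q.eval (-x) = -q.eval x)) ∨
       ((∀ x : ℂ, p.eval (-x) = -p.eval x) ∧ (∀ x : ℂ, q.eval (-x) = q.eval x))) ∧
      (∀ x : ℝ, ‖p.eval (x : ℂ)‖ ^ 2 + (1 - x ^ 2) * ‖q.eval (x : ℂ)‖ ^ 2 = 1)) := by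
  have hcoeff : p.coeff n ≠ 0 := coeff_ne_zero_of_eq_degree hp
  constructor
  · rintro ⟨Φ, hΦ⟩
    obtain ⟨-, hdegQ, hparP, hparQ, hnorm⟩ := IsQSPPair.qspPoly Φ n
    have hP : (qspPoly Φ n).1 = p := by
      refine eq_of_infinite_eval_eq _ _ <| ((Set.Icc_infinite (by norm_num : (-1 : ℝ) < 1)).image
        ofReal_injective.injOn).mono ?_
      rintro _ ⟨x, hx, rfl⟩
      exact (congrFun (QSP_apply_zero hx Φ n) 0).symm.trans (hΦ x hx)
    rw [hP] at hparP hnorm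
    exact ⟨_, hdegQ, (even_odd_or_odd_even_iff hcoeff).2 ⟨hparP, hparQ⟩, hnorm⟩
  · rintro ⟨q, hq, hpar, hnorm⟩
    obtain ⟨hparP, hparQ⟩ := (even_odd_or_odd_even_iff hcoeff).1 hpar
    have hdeg : p.degree < ↑(n + 1) := by rw [hp]; exact_mod_cast n.lt_succ_self
    obtain ⟨Φ, hΦ⟩ := (IsQSPPair.mk (PQ := (p, q)) hdeg hq hparP hparQ hnorm).exists_qspPoly_eq
    exact ⟨Φ, fun x hx => by rw [QSP_apply_zero hx, hΦ]; rfl⟩
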